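/- arXiv:0712.3495 — 2 statements merged into one kernel-verified Lean document; each statement's English description precedes it below -/
import Mathlib

section
/- If R is a von Neumann regular ring, then the identity map R → R is the maximal flat epimorphic extension in the following sense: any injective ring epimorphism f : R → S making S flat as a left R-module and such that S is generated by f(R) as a ring of quotients with f(J)S = S for J ranging over a filter of dense right ideals, satisfies: every finitely generated right ideal J of R with f(J)S = S must equal R. Concretely: in a von Neumann regular ring R, if J is a finitely generated right ideal of R and the inclusion R → S is a flat ring epimorphism with f(J)S = S, then J = R. -/
universe v

/-!
Regularity makes every ideal idempotent, so a finitely generated ideal `J` is generated by an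
idempotent `e`. If `J` extends to the unit ideal, the image of `e` is an idempotent unit, hence `1`,
and injectivity gives `e = 1`.
-/

theorem Ideal.isIdempotentElem_of_vonNeumannRegular {R : Type*} [CommRing R]
    (hvn : ∀ a : R, ∃ x : R, a * x * a = a) (I : Ideal R) : IsIdempotentElem I := by
  refine le_antisymm Ideal.mul_le_left fun a ha => ?_
  obtain ⟨x, hx⟩ := hvn a
  rw [← hx, mul_assoc]
  exact Ideal.mul_mem_mul ha (I.mul_mem_left x ha)

theorem IsIdempotentElem.eq_one_of_isUnit_map {R S : Type*} [Ring R] [Ring S] {f : R →+* S}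
    (hf : Function.Injective f) {e : R} (he : IsIdempotentElem e) (hu : IsUnit (f e)) : e = 1 :=
  hf <| by rw [map_one, ← IsIdempotentElem.iff_eq_one_of_isUnit hu]; exact he.map f

theorem stmt_15_general {R S : Type*} [CommRing R] [CommRing S] [Algebra R S]
    (hvn : ∀ a : R, ∃ x : R, a * x * a = a)
    (hinj : Function.Injective (algebraMap R S))
    (J : Ideal R) (hfg : J.FG) (hJ : Ideal.map (algebraMap R S) J = ⊤) :
    J = ⊤ := by
  obtain ⟨e, he, rfl⟩ :=
    (J.isIdempotentElem_iff_of_fg hfg).1 (J.isIdempotentElem_of_vonNeumannRegular hvn)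
  rw [Ideal.submodule_span_eq, Ideal.map_span, Set.image_singleton,
    Ideal.span_singleton_eq_top] at hJ
  rw [he.eq_one_of_isUnit_map hinj hJ, Ideal.submodule_span_eq, Ideal.span_singleton_one]

/-- In a von Neumann regular ring `R`, if `J` is a finitely generated ideal and `R → S`
is an injective flat ring epimorphism with `f(J)S = S`, then `J = R`. -/
theorem stmt_15 {R S : Type*} [CommRing R] [CommRing S] [Algebra R S]
    [Module.Flat R S]
    (hvn : ∀ a : R, ∃ x : R, a * x * a = a)
    (hinj : Function.Injective (algebraMap R S))
    (hepi : ∀ (T : Type v) [Ring T] (g h : S →+* T),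
      g.comp (algebraMap R S) = h.comp (algebraMap R S) → g = h)
    (J : Ideal R) (hfg : J.FG) (hJ : Ideal.map (algebraMap R S) J = ⊤) :
    J = ⊤ :=
  stmt_15_general hvn hinj J hfg hJ
end

section
/- Let S be a ring extension of R (R a subring of S) and define S'_r = {s ∈ S | for every r ∈ R, (sr : R)S = S}, where (x : R) = {a ∈ R | xa ∈ R}. Then S'_r is a subring of S containing R. -/
private lemma span_top_of_one_mem {S : Type*} [Ring S] {t : Set S}
    (h : (1 : S) ∈ t) : Submodule.span Sᵐᵒᵖ t = ⊤ := by
  rw [Submodule.eq_top_iff']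
  intro x
  have : (MulOpposite.op x) • (1 : S) = x := by simp
  rw [← this]
  exact Submodule.smul_mem _ _ (Submodule.subset_span h)

private lemma key_lemma {S : Type*} [Ring S] {s t : Set S} {a : S}
    (h1 : (1 : S) ∈ Submodule.span Sᵐᵒᵖ s)
    (h2 : ∀ b ∈ s, a * b ∈ t) : a ∈ Submodule.span Sᵐᵒᵖ t := by
  have main : ∀ c ∈ Submodule.span Sᵐᵒᵖ s, a * c ∈ Submodule.span Sᵐᵒᵖ t := by
    intro c hc
    induction hc using Submodule.span_induction with
    | mem x hx => exact Submodule.subset_span (h2 x hx)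
    | zero => simpa using Submodule.zero_mem _
    | add x y _ _ hx hy => simpa [mul_add] using Submodule.add_mem _ hx hy
    | smul u x _ hx =>
        have : a * (u • x) = u • (a * x) := by
          simp [MulOpposite.smul_eq_mul_unop, mul_assoc]
        rw [this]
        exact Submodule.smul_mem _ _ hx
  simpa using main 1 h1

/-- For a ring extension `R ⊆ S`, the set
`S'_r = {s ∈ S | (sr : R)S = S for all r ∈ R}` is a subring of `S` containing `R`. -/
theorem stmt_16 {S : Type*} [Ring S] (R : Subring S) :
    ∃ T : Subring S,
      (T : Set S) =
        {s : S | ∀ r ∈ R, Submodule.span Sᵐᵒᵖ {a : S | a ∈ R ∧ (s * r) * a ∈ R} = ⊤} ∧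
      R ≤ T := by
  refine ⟨{
    carrier := {s : S | ∀ r ∈ R, Submodule.span Sᵐᵒᵖ {a : S | a ∈ R ∧ (s * r) * a ∈ R} = ⊤}
    one_mem' := by
      intro r hr
      exact span_top_of_one_mem ⟨R.one_mem, by simpa using hr⟩
    zero_mem' := by
      intro r hr
      exact span_top_of_one_mem ⟨R.one_mem, by simpa using R.zero_mem⟩
    neg_mem' := by
      intro s hs r hr
      have := hs r hr
      convert this using 3
      ext a
      simp only [Set.mem_setOf_eq, neg_mul, neg_mem_iff]
    add_mem' := by
      intro s t hs ht r hr
      rw [Submodule.eq_top_iff']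
      intro x
      have h1 : (1 : S) ∈ Submodule.span Sᵐᵒᵖ {a : S | a ∈ R ∧ (t * r) * a ∈ R} := by
        rw [ht r hr]; trivial
      have hsub : {a : S | a ∈ R ∧ (t * r) * a ∈ R} ⊆
          ↑(Submodule.span Sᵐᵒᵖ {a : S | a ∈ R ∧ ((s + t) * r) * a ∈ R}) := by
        rintro a ⟨haR, hta⟩
        have hra : r * a ∈ R := R.mul_mem hr haR
        have h2 : (1 : S) ∈ Submodule.span Sᵐᵒᵖ {b : S | b ∈ R ∧ (s * (r * a)) * b ∈ R} := by
          rw [hs (r * a) hra]; trivial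
        refine key_lemma h2 ?_
        rintro b ⟨hbR, hsb⟩
        refine ⟨R.mul_mem haR hbR, ?_⟩
        have : ((s + t) * r) * (a * b) = (s * (r * a)) * b + ((t * r) * a) * b := by noncomm_ring
        rw [this]
        exact R.add_mem hsb (R.mul_mem hta hbR)
      have : Submodule.span Sᵐᵒᵖ {a : S | a ∈ R ∧ (t * r) * a ∈ R} ≤
          Submodule.span Sᵐᵒᵖ {a : S | a ∈ R ∧ ((s + t) * r) * a ∈ R} :=
        Submodule.span_le.mpr hsub
      have h1' := this h1
      have : (MulOpposite.op x) • (1 : S) = x := by simp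
      rw [← this]
      exact Submodule.smul_mem _ _ h1'
    mul_mem' := by
      intro s t hs ht r hr
      rw [Submodule.eq_top_iff']
      intro x
      have h1 : (1 : S) ∈ Submodule.span Sᵐᵒᵖ {a : S | a ∈ R ∧ (t * r) * a ∈ R} := by
        rw [ht r hr]; trivial
      have hsub : {a : S | a ∈ R ∧ (t * r) * a ∈ R} ⊆
          ↑(Submodule.span Sᵐᵒᵖ {a : S | a ∈ R ∧ ((s * t) * r) * a ∈ R}) := by
        rintro a ⟨haR, hta⟩
        have h2 : (1 : S) ∈ Submodule.span Sᵐᵒᵖ {b : S | b ∈ R ∧ (s * ((t * r) * a)) * b ∈ R} := by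
          rw [hs ((t * r) * a) hta]; trivial
        refine key_lemma h2 ?_
        rintro b ⟨hbR, hsb⟩
        refine ⟨R.mul_mem haR hbR, ?_⟩
        have : ((s * t) * r) * (a * b) = (s * ((t * r) * a)) * b := by noncomm_ring
        rw [this]
        exact hsb
      have hle : Submodule.span Sᵐᵒᵖ {a : S | a ∈ R ∧ (t * r) * a ∈ R} ≤
          Submodule.span Sᵐᵒᵖ {a : S | a ∈ R ∧ ((s * t) * r) * a ∈ R} :=
        Submodule.span_le.mpr hsub
      have h1' := hle h1
      have : (MulOpposite.op x) • (1 : S) = x := by simp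
      rw [← this]
      exact Submodule.smul_mem _ _ h1' }, rfl, ?_⟩
  intro s hsR r hr
  exact span_top_of_one_mem ⟨R.one_mem, by simpa using R.mul_mem hsR hr⟩
end
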